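/- arXiv:1002.3476 — 4 statements merged into one kernel-verified Lean document; each statement's English description precedes it below -/
import Mathlib

section
/- Let k ≥ 1 and let μ be a Borel probability measure on ℝ^k. Let (X_n) and (X̃_n) be sequences of ℝ^k-valued random vectors such that for every n, X_n and X̃_n are defined on the same probability space and X_n ≥ X̃_n. If X_n ⇒ μ and X̃_n ⇒ μ, then X_n − X̃_n → 0 in probability. -/
open MeasureTheory Filter Topology

/-!
Clamping every coordinate to `[-R, R]` and summing gives a bounded continuous function `F_R`,
monotone for the coordinatewise order. Let `c_M` be a continuous cutoff vanishing on the ball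
of radius `M` and equal to `1` outside radius `M + 1`. If `x' ≤ x` and `ε < ‖x - x'‖`, then
`1 ≤ c_M x' + (F_R x - F_R x') / ε` for `R = M + 1 + ε`: either `x'` lies outside radius
`M + 1`, or the coordinate carrying the gap is not clamped at `x'` and is clamped no lower
than `x'_i + ε` at `x`. The right-hand side is nonnegative when `x' ≤ x`, so by Markov's
inequality the probability of a gap is at most its expectation. That expectation only
involves the laws of `X n` and `X' n`, hence tends to
`∫ c_M dμ + (∫ F_R dμ - ∫ F_R dμ) / ε = ∫ c_M dμ`, which tends to `0` as `M → ∞`.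
-/

namespace ENNReal

theorem tendsto_zero_of_forall_eventually_le {ι κ : Type*} {l : Filter ι} {l' : Filter κ}
    [l'.NeBot] {a : ι → ℝ≥0∞} {u : κ → ι → ℝ≥0∞} {v : κ → ℝ≥0∞}
    (hv : Tendsto v l' (𝓝 0)) (hu : ∀ M, Tendsto (u M) l (𝓝 (v M)))
    (ha : ∀ M, ∀ᶠ n in l, a n ≤ u M n) : Tendsto a l (𝓝 0) := by
  refine ENNReal.tendsto_nhds_zero.2 fun η hη => ?_
  obtain ⟨M, hM⟩ := (hv.eventually (gt_mem_nhds hη)).exists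
  filter_upwards [ha M, (hu M).eventually (gt_mem_nhds hM)] with n han hun
  exact han.trans hun.le

end ENNReal

open BoundedContinuousFunction

section TailCutoff

variable {E : Type*} [SeminormedAddCommGroup E]

noncomputable def tailCutoff (M : ℝ) : E →ᵇ ℝ :=
  ofNormedAddCommGroup (fun x => min 1 (max 0 (‖x‖ - M))) (by fun_prop) 1 fun x => by
    rw [Real.norm_eq_abs, abs_le]
    exact ⟨by linarith [le_min zero_le_one (le_max_left 0 (‖x‖ - M))], min_le_left _ _⟩

theorem tailCutoff_apply (M : ℝ) (x : E) : tailCutoff M x = min 1 (max 0 (‖x‖ - M)) := rfl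

theorem tailCutoff_nonneg (M : ℝ) (x : E) : 0 ≤ tailCutoff M x :=
  le_min zero_le_one (le_max_left _ _)

theorem tailCutoff_le_one (M : ℝ) (x : E) : tailCutoff M x ≤ 1 :=
  min_le_left _ _

theorem tailCutoff_eq_one {M : ℝ} {x : E} (h : M + 1 ≤ ‖x‖) : tailCutoff M x = 1 :=
  min_eq_left (le_max_of_le_right (by linarith))

theorem tailCutoff_eq_zero {M : ℝ} {x : E} (h : ‖x‖ ≤ M) : tailCutoff M x = 0 := by
  rw [tailCutoff_apply, max_eq_left (by linarith), min_eq_right zero_le_one]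

theorem tendsto_integral_tailCutoff_atTop [MeasurableSpace E] [OpensMeasurableSpace E]
    (μ : Measure E) [IsFiniteMeasure μ] :
    Tendsto (fun M => ∫ x, tailCutoff M x ∂μ) atTop (𝓝 0) := by
  have hlim : ∀ x : E, Tendsto (fun M => tailCutoff M x) atTop (𝓝 0) := fun x =>
    tendsto_const_nhds.congr' <| (eventually_ge_atTop ‖x‖).mono fun M hM =>
      (tailCutoff_eq_zero hM).symm
  simpa using tendsto_integral_filter_of_dominated_convergence (fun _ => (1 : ℝ))
    (.of_forall fun M => (tailCutoff M).continuous.aestronglyMeasurable)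
    (.of_forall fun M => .of_forall fun x => by
      rw [Real.norm_of_nonneg (tailCutoff_nonneg M x)]; exact tailCutoff_le_one M x)
    (integrable_const 1) (.of_forall hlim)

end TailCutoff

section ClampSum

variable {ι : Type*} [Fintype ι]

theorem abs_max_neg_min_le (R t : ℝ) : |max (-R) (min R t)| ≤ |R| := by
  rw [abs_le]
  constructor <;> cases abs_cases R <;> grind

noncomputable def clampSum (R : ℝ) : (ι → ℝ) →ᵇ ℝ :=
  ofNormedAddCommGroup (fun x => ∑ i, max (-R) (min R (x i))) (by fun_prop)
    (Fintype.card ι * |R|) fun x => by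
      calc ‖∑ i, max (-R) (min R (x i))‖ ≤ ∑ i, |max (-R) (min R (x i))| :=
            norm_sum_le _ _
        _ ≤ ∑ _i : ι, |R| := Finset.sum_le_sum fun i _ => abs_max_neg_min_le R (x i)
        _ = Fintype.card ι * |R| := by simp

theorem clampSum_apply (R : ℝ) (x : ι → ℝ) :
    clampSum R x = ∑ i, max (-R) (min R (x i)) := rfl

theorem clampSum_mono (R : ℝ) : Monotone (clampSum (ι := ι) R) := fun _ _ hxy =>
  Finset.sum_le_sum fun i _ => max_le_max le_rfl (min_le_min le_rfl (hxy i))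

theorem le_clampSum_sub {R ε : ℝ} {x x' : ι → ℝ} (hle : x' ≤ x) (hR : ‖x'‖ + ε ≤ R)
    (hε : ε < ‖x - x'‖) : ε ≤ clampSum R x - clampSum R x' := by
  obtain hε₀ | hε₀ := lt_or_ge ε 0
  · linarith [clampSum_mono R hle]
  obtain ⟨i, hi⟩ : ∃ i, ε < x i - x' i := by
    by_contra! h
    refine hε.not_ge ((pi_norm_le_iff_of_nonneg hε₀).2 fun i => ?_)
    rw [Pi.sub_apply, Real.norm_of_nonneg (sub_nonneg.2 (hle i))]
    exact h i
  have hx'i : |x' i| + ε ≤ R := by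
    linarith [norm_le_pi_norm x' i, Real.norm_eq_abs (x' i)]
  have hclamp : ∀ j, max (-R) (min R (x' j)) ≤ max (-R) (min R (x j)) := fun j =>
    max_le_max le_rfl (min_le_min le_rfl (hle j))
  calc ε ≤ max (-R) (min R (x i)) - max (-R) (min R (x' i)) := by
        cases abs_cases (x' i) <;> grind
    _ ≤ ∑ j, (max (-R) (min R (x j)) - max (-R) (min R (x' j))) :=
        Finset.single_le_sum (fun j _ => sub_nonneg.2 (hclamp j)) (Finset.mem_univ i)
    _ = clampSum R x - clampSum R x' := by
        rw [Finset.sum_sub_distrib, clampSum_apply, clampSum_apply]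

end ClampSum

theorem BoundedContinuousFunction.integrable_comp {Ω E : Type*} [MeasurableSpace Ω]
    {P : Measure Ω} [IsFiniteMeasure P] [TopologicalSpace E] [MeasurableSpace E]
    [OpensMeasurableSpace E] (f : E →ᵇ ℝ) {Y : Ω → E} (hY : Measurable Y) :
    Integrable (fun ω => f (Y ω)) P :=
  (f.integrable (P.map Y)).comp_measurable hY

section CouplingBound

variable {ι : Type*} [Fintype ι]

noncomputable def couplingBound (M ε : ℝ) (x x' : ι → ℝ) : ℝ :=
  tailCutoff M x' + (clampSum (M + 1 + ε) x - clampSum (M + 1 + ε) x') / ε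

theorem couplingBound_nonneg {M ε : ℝ} {x x' : ι → ℝ} (hle : x' ≤ x) (hε : 0 ≤ ε) :
    0 ≤ couplingBound M ε x x' :=
  add_nonneg (tailCutoff_nonneg M x')
    (div_nonneg (sub_nonneg.2 (clampSum_mono _ hle)) hε)

theorem one_le_couplingBound {M ε : ℝ} {x x' : ι → ℝ} (hle : x' ≤ x) (hε : 0 < ε)
    (hgap : ε < ‖x - x'‖) : 1 ≤ couplingBound M ε x x' := by
  have hclamp := sub_nonneg.2 (clampSum_mono (M + 1 + ε) hle)
  obtain hfar | hnear := le_or_gt (M + 1) ‖x'‖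
  · rw [couplingBound, tailCutoff_eq_one hfar]
    linarith [div_nonneg hclamp hε.le]
  · have hgap' := le_clampSum_sub hle (by linarith) hgap (R := M + 1 + ε)
    rw [couplingBound]
    linarith [tailCutoff_nonneg M x', (one_le_div hε).2 hgap']

variable {Ω : Type*} [MeasurableSpace Ω] {P : Measure Ω} [IsFiniteMeasure P]
  {X X' : Ω → ι → ℝ}

theorem integrable_couplingBound (hX : Measurable X) (hX' : Measurable X') (M ε : ℝ) :
    Integrable (fun ω => couplingBound M ε (X ω) (X' ω)) P :=
  ((tailCutoff M).integrable_comp hX').add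
    (((clampSum _).integrable_comp hX).sub ((clampSum _).integrable_comp hX') |>.div_const ε)

theorem integral_couplingBound (hX : Measurable X) (hX' : Measurable X') (M ε : ℝ) :
    ∫ ω, couplingBound M ε (X ω) (X' ω) ∂P =
      ∫ ω, tailCutoff M (X' ω) ∂P +
        (∫ ω, clampSum (M + 1 + ε) (X ω) ∂P - ∫ ω, clampSum (M + 1 + ε) (X' ω) ∂P) / ε := by
  simp only [couplingBound]
  have hF := (clampSum (M + 1 + ε)).integrable_comp hX (P := P)
  have hF' := (clampSum (M + 1 + ε)).integrable_comp hX' (P := P)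
  have hD : Integrable
      (fun ω => (clampSum (M + 1 + ε) (X ω) - clampSum (M + 1 + ε) (X' ω)) / ε) P :=
    (hF.sub hF').div_const ε
  rw [integral_add ((tailCutoff M).integrable_comp hX') hD, integral_div, integral_sub hF hF']

theorem measure_lt_norm_sub_le_integral_couplingBound (hX : Measurable X) (hX' : Measurable X')
    (hle : ∀ᵐ ω ∂P, X' ω ≤ X ω) {ε : ℝ} (hε : 0 < ε) (M : ℝ) :
    P {ω | ε < ‖X ω - X' ω‖} ≤ ENNReal.ofReal (∫ ω, couplingBound M ε (X ω) (X' ω) ∂P) := by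
  calc P {ω | ε < ‖X ω - X' ω‖} ≤ P {ω | 1 ≤ couplingBound M ε (X ω) (X' ω)} :=
        measure_mono_ae <| hle.mono fun ω hω hgap => one_le_couplingBound hω hε hgap
    _ ≤ _ := (integrable_couplingBound hX hX' M ε).measure_le_integral
        (hle.mono fun ω hω => couplingBound_nonneg hω hε.le) fun _ h => h

end CouplingBound

theorem stochDom_same_limit_convergence_in_probability_general
    (k : ℕ)
    (μ : Measure (Fin k → ℝ)) [IsProbabilityMeasure μ]
    (Ω : ℕ → Type*) [∀ n, MeasurableSpace (Ω n)]
    (P : ∀ n, Measure (Ω n)) [∀ n, IsProbabilityMeasure (P n)]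
    (X X' : ∀ n, Ω n → (Fin k → ℝ))
    (hX : ∀ n, Measurable (X n)) (hX' : ∀ n, Measurable (X' n))
    (hge : ∀ n, ∀ᵐ ω ∂(P n), ∀ i, X' n ω i ≤ X n ω i)
    (hXconv : ∀ f : BoundedContinuousFunction (Fin k → ℝ) ℝ,
      Tendsto (fun n => ∫ ω, f (X n ω) ∂(P n)) atTop (𝓝 (∫ x, f x ∂μ)))
    (hX'conv : ∀ f : BoundedContinuousFunction (Fin k → ℝ) ℝ,
      Tendsto (fun n => ∫ ω, f (X' n ω) ∂(P n)) atTop (𝓝 (∫ x, f x ∂μ))) :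
    ∀ ε : ℝ, 0 < ε →
      Tendsto (fun n => P n {ω | ε < ‖X n ω - X' n ω‖}) atTop (𝓝 0) := by
  intro ε hε
  refine ENNReal.tendsto_zero_of_forall_eventually_le (l' := atTop)
    (v := fun M => ENNReal.ofReal (∫ x, tailCutoff M x ∂μ))
    (u := fun M n => ENNReal.ofReal (∫ ω, couplingBound M ε (X n ω) (X' n ω) ∂P n)) ?_
    (fun M => ENNReal.tendsto_ofReal ?_)
    (fun M => .of_forall fun n =>
      measure_lt_norm_sub_le_integral_couplingBound (hX n) (hX' n) (hge n) hε M)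
  · simpa using ENNReal.tendsto_ofReal (tendsto_integral_tailCutoff_atTop μ)
  · simp only [integral_couplingBound (hX _) (hX' _)]
    simpa using (hX'conv (tailCutoff M)).add
      (((hXconv (clampSum (M + 1 + ε))).sub (hX'conv (clampSum (M + 1 + ε)))).div_const ε)

/-- **Coupling lemma (first half of Lemma 4.1 generalization).**
If `X n ≥ X' n` coordinate-wise (a.s., on a common probability space for each `n`), and both
sequences converge weakly in law to the same Borel probability measure `μ` on `ℝ^k`, then
`X n − X' n` converges to zero in probability (in the sup-norm on `ℝ^k`). -/
theorem stochDom_same_limit_convergence_in_probability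
    (k : ℕ) (hk : 1 ≤ k)
    (μ : Measure (Fin k → ℝ)) [IsProbabilityMeasure μ]
    (Ω : ℕ → Type*) [∀ n, MeasurableSpace (Ω n)]
    (P : ∀ n, Measure (Ω n)) [∀ n, IsProbabilityMeasure (P n)]
    (X X' : ∀ n, Ω n → (Fin k → ℝ))
    (hX : ∀ n, Measurable (X n)) (hX' : ∀ n, Measurable (X' n))
    (hge : ∀ n, ∀ᵐ ω ∂(P n), ∀ i, X' n ω i ≤ X n ω i)
    (hXconv : ∀ f : BoundedContinuousFunction (Fin k → ℝ) ℝ,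
      Tendsto (fun n => ∫ ω, f (X n ω) ∂(P n)) atTop (𝓝 (∫ x, f x ∂μ)))
    (hX'conv : ∀ f : BoundedContinuousFunction (Fin k → ℝ) ℝ,
      Tendsto (fun n => ∫ ω, f (X' n ω) ∂(P n)) atTop (𝓝 (∫ x, f x ∂μ))) :
    ∀ ε : ℝ, 0 < ε →
      Tendsto (fun n => P n {ω | ε < ‖X n ω - X' n ω‖}) atTop (𝓝 0) :=
  stochDom_same_limit_convergence_in_probability_general k μ Ω P X X' hX hX' hge hXconv hX'conv
end

section
/- Let k ≥ 1 and let μ₁, μ₂, μ₃ be Borel probability measures on ℝ^k. Let X_n, X̃_n, Y_n, Ỹ_n be ℝ^k-valued random vectors, all four defined on a common probability space for each n, such that X_n ≥ X̃_n, X_n ⇒ μ₁ and X̃_n ⇒ μ₁, and Y_n ≥ Ỹ_n, Y_n ⇒ μ₂ and Ỹ_n ⇒ μ₂. Let Z_n = max(X_n, Y_n) and Z̃_n = max(X̃_n, Ỹ_n), where max denotes the coordinate-wise maximum. If Z̃_n ⇒ μ₃, then Z_n ⇒ μ₃. -/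
open MeasureTheory Filter Topology

open scoped ENNReal BoundedContinuousFunction

/-!
Coordinate-wise, `|max a b - max a' b'| ≤ max |a - a'| |b - b'|`, so by the converging-together
lemma `tendstoInDistribution_of_tendstoInMeasure_sub` it suffices that `X n - X' n` and
`Y n - Y' n` tend to `0` in probability.

Let `V ≤ U` have the same weak limit. The function `G x = ∑ i, arctan (x i)` is bounded,
continuous and strictly increasing in each coordinate, so `𝔼[G U - G V] → 0` with a nonnegative
integrand, and `G U - G V → 0` in probability by Markov's inequality. Since `V` is tight and
`arctan` is uniformly strictly increasing on bounded sets, a gap of size `ε` in some coordinate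
of `U - V` together with `‖V‖ ≤ R` forces `G U - G V ≥ η(ε, R) > 0`; hence `U - V → 0` in
probability.
-/

lemma norm_sup_sub_sup_le_max {ι : Type*} [Fintype ι] (a b c d : ι → ℝ) :
    ‖a ⊔ b - c ⊔ d‖ ≤ max ‖a - c‖ ‖b - d‖ :=
  (pi_norm_le_iff_of_nonneg (le_max_of_le_left (norm_nonneg _))).2 fun i =>
    (abs_max_sub_max_le_max _ _ _ _).trans
      (max_le_max (norm_le_pi_norm (a - c) i) (norm_le_pi_norm (b - d) i))

section SumArctan

noncomputable def sumArctan (ι : Type*) [Fintype ι] : (ι → ℝ) →ᵇ ℝ :=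
  BoundedContinuousFunction.ofNormedAddCommGroup (fun x => ∑ i, Real.arctan (x i))
    (by fun_prop) (Fintype.card ι * (Real.pi / 2)) fun x => by
      calc ‖∑ i, Real.arctan (x i)‖ ≤ ∑ i, ‖Real.arctan (x i)‖ := norm_sum_le _ _
        _ ≤ ∑ _i : ι, Real.pi / 2 := by
          gcongr with i
          exact abs_le.2 ⟨(Real.neg_pi_div_two_lt_arctan _).le, (Real.arctan_lt_pi_div_two _).le⟩
        _ = Fintype.card ι * (Real.pi / 2) := by simp

variable {ι : Type*} [Fintype ι]

lemma sumArctan_apply (x : ι → ℝ) : sumArctan ι x = ∑ i, Real.arctan (x i) := rfl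

lemma sumArctan_mono : Monotone (sumArctan ι) := fun _ _ h =>
  Finset.sum_le_sum fun i _ => Real.arctan_strictMono.monotone (h i)

lemma exists_pos_le_arctan_sub {δ : ℝ} (hδ : 0 < δ) (R : ℝ) :
    ∃ η > 0, ∀ t ∈ Set.Icc (-R) R, ∀ s, t + δ ≤ s → η ≤ Real.arctan s - Real.arctan t := by
  obtain ⟨η, hη, hle⟩ := (isCompact_Icc (a := -R) (b := R)).exists_forall_le'
    (f := fun t => Real.arctan (t + δ) - Real.arctan t) (by fun_prop)
    fun t _ => sub_pos.2 (Real.arctan_strictMono (by linarith))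
  exact ⟨η, hη, fun t ht s hs =>
    (hle t ht).trans (by simpa using Real.arctan_strictMono.monotone hs)⟩

lemma exists_pos_le_sumArctan_sub {ε : ℝ} (hε : 0 < ε) (R : ℝ) :
    ∃ η > 0, ∀ u v : ι → ℝ, v ≤ u → ‖v‖ ≤ R → ε ≤ ‖u - v‖ →
      η ≤ sumArctan ι u - sumArctan ι v := by
  obtain ⟨η, hη, hgap⟩ := exists_pos_le_arctan_sub hε R
  refine ⟨η, hη, fun u v hvu hv huv => ?_⟩
  obtain ⟨i, hi⟩ : ∃ i, ε ≤ ‖u i - v i‖ := by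
    by_contra! h
    exact (pi_norm_lt_iff hε).2 h |>.not_ge huv
  have hvi : v i ∈ Set.Icc (-R) R := abs_le.1 ((norm_le_pi_norm v i).trans hv)
  have hgap_i : ε ≤ u i - v i := by
    rwa [Real.norm_eq_abs, abs_of_nonneg (sub_nonneg.2 (hvu i))] at hi
  calc η ≤ Real.arctan (u i) - Real.arctan (v i) := hgap _ hvi _ (by linarith)
    _ ≤ ∑ j, (Real.arctan (u j) - Real.arctan (v j)) :=
      Finset.single_le_sum (f := fun j => Real.arctan (u j) - Real.arctan (v j))
        (fun j _ => sub_nonneg.2 (Real.arctan_strictMono.monotone (hvu j))) (Finset.mem_univ i)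
    _ = sumArctan ι u - sumArctan ι v := by simp [sumArctan_apply]

end SumArctan

namespace MeasureTheory

section ConvergenceInMeasure

variable {κ : Type*} {l : Filter κ} {Ω : Type*} [MeasurableSpace Ω] {μ : Measure Ω}

lemma tendstoInMeasure_zero_of_tendsto_integral_of_nonneg [IsFiniteMeasure μ] {f : κ → Ω → ℝ}
    (hf_nonneg : ∀ i, 0 ≤ᵐ[μ] f i) (hf_int : ∀ i, Integrable (f i) μ)
    (h : Tendsto (fun i => ∫ ω, f i ω ∂μ) l (𝓝 0)) : TendstoInMeasure μ f l 0 := by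
  refine tendstoInMeasure_of_tendsto_eLpNorm one_ne_zero (fun i => (hf_int i).1)
    aestronglyMeasurable_const ?_
  have heLpNorm : ∀ i, eLpNorm (f i - 0) 1 μ = ENNReal.ofReal (∫ ω, f i ω ∂μ) := fun i => by
    rw [sub_zero, eLpNorm_one_eq_lintegral_enorm,
      ofReal_integral_eq_lintegral_ofReal (hf_int i) (hf_nonneg i)]
    exact lintegral_congr_ae ((hf_nonneg i).mono fun ω hω => Real.enorm_of_nonneg hω)
  simpa only [heLpNorm, ENNReal.ofReal_zero] using ENNReal.tendsto_ofReal h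

lemma TendstoInMeasure.of_norm_le_max {E F G : Type*} [SeminormedAddCommGroup E]
    [SeminormedAddCommGroup F] [SeminormedAddCommGroup G] {f : κ → Ω → E} {g : κ → Ω → F}
    {h : κ → Ω → G} (hf : TendstoInMeasure μ f l 0) (hg : TendstoInMeasure μ g l 0)
    (hle : ∀ i ω, ‖h i ω‖ ≤ max ‖f i ω‖ ‖g i ω‖) : TendstoInMeasure μ h l 0 := by
  rw [tendstoInMeasure_iff_norm] at hf hg ⊢
  intro ε hε
  refine tendsto_of_tendsto_of_tendsto_of_le_of_le tendsto_const_nhds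
    (by simpa using (hf ε hε).add (hg ε hε)) (fun _ => zero_le) fun i => ?_
  refine (measure_mono fun ω hω => ?_).trans (measure_union_le _ _)
  simp only [Set.mem_ofPred_eq, Set.mem_union, Pi.zero_apply, sub_zero] at hω ⊢
  exact le_max_iff.1 (hω.trans (hle i ω))

end ConvergenceInMeasure

section ConvergenceInDistribution

variable {κ : Type*} {l : Filter κ} {Ω : κ → Type*} [∀ i, MeasurableSpace (Ω i)]
  {P : ∀ i, Measure (Ω i)} [∀ i, IsProbabilityMeasure (P i)]
  {Ω' : Type*} [MeasurableSpace Ω'] {μ' : Measure Ω'} [IsProbabilityMeasure μ']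
  {E : Type*} [MeasurableSpace E]

lemma TendstoInDistribution.tendsto_integral [TopologicalSpace E] [OpensMeasurableSpace E]
    {U : ∀ i, Ω i → E} {Z : Ω' → E} (h : TendstoInDistribution U l Z P μ') (f : E →ᵇ ℝ) :
    Tendsto (fun i => ∫ ω, f (U i ω) ∂P i) l (𝓝 (∫ ω, f (Z ω) ∂μ')) := by
  have := ProbabilityMeasure.tendsto_iff_forall_integral_tendsto.1 h.tendsto f
  simp only [ProbabilityMeasure.coe_mk] at this
  rwa [integral_map h.aemeasurable_limit f.continuous.aestronglyMeasurable, funext fun i =>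
    integral_map (h.forall_aemeasurable i) f.continuous.aestronglyMeasurable] at this

lemma tendstoInDistribution_id_iff [TopologicalSpace E] [OpensMeasurableSpace E]
    {U : ∀ i, Ω i → E} (hU : ∀ i, AEMeasurable (U i) (P i)) (μ : Measure E)
    [IsProbabilityMeasure μ] :
    TendstoInDistribution U l id P μ ↔
      ∀ f : E →ᵇ ℝ, Tendsto (fun i => ∫ ω, f (U i ω) ∂P i) l (𝓝 (∫ x, f x ∂μ)) := by
  refine ⟨fun h => h.tendsto_integral, fun h => ⟨hU, aemeasurable_id, ?_⟩⟩
  refine ProbabilityMeasure.tendsto_iff_forall_integral_tendsto.2 fun f => ?_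
  simp only [ProbabilityMeasure.coe_mk, Measure.map_id]
  simpa only [funext fun i => integral_map (hU i) f.continuous.aestronglyMeasurable] using h f

lemma tendstoInDistribution_comp_eval_iff [TopologicalSpace E] [OpensMeasurableSpace E]
    {U : ∀ i, Ω i → E} (hU : ∀ i, Measurable (U i)) {Z : Ω' → E} :
    TendstoInDistribution (fun i ω => U i (ω i)) l Z (fun _ => Measure.infinitePi P) μ' ↔
      TendstoInDistribution U l Z P μ' := by
  have hmap : ∀ i, (Measure.infinitePi P).map (fun ω => U i (ω i)) = (P i).map (U i) :=
    fun i => by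
      rw [← (measurePreserving_eval_infinitePi P i).map_eq,
        Measure.map_map (hU i) (measurable_pi_apply i)]
      rfl
  refine ⟨fun h => ⟨fun i => (hU i).aemeasurable, h.aemeasurable_limit, ?_⟩,
    fun h => ⟨fun i => ((hU i).comp (measurable_pi_apply i)).aemeasurable, h.aemeasurable_limit,
      ?_⟩⟩
  · exact (tendsto_congr fun i => Subtype.ext (hmap i)).1 h.tendsto
  · exact (tendsto_congr fun i => Subtype.ext (hmap i)).2 h.tendsto

lemma TendstoInDistribution.exists_eventually_measure_norm_ge_lt [NormedAddCommGroup E]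
    [BorelSpace E] {U : ∀ i, Ω i → E} {Z : Ω' → E} (h : TendstoInDistribution U l Z P μ')
    {γ : ℝ≥0∞} (hγ : 0 < γ) : ∃ R : ℝ, ∀ᶠ i in l, P i {ω | R ≤ ‖U i ω‖} < γ := by
  have htail : Tendsto (fun R : ℝ => μ'.map Z {x | R ≤ ‖x‖}) atTop (𝓝 0) := by
    have hempty : ⋂ R : ℝ, {x : E | R ≤ ‖x‖} = ∅ :=
      Set.eq_empty_of_forall_notMem fun x hx =>
        (lt_add_one ‖x‖).not_ge (Set.mem_iInter.1 hx (‖x‖ + 1))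
    have := tendsto_measure_iInter_atTop (μ := μ'.map Z) (s := fun R : ℝ => {x | R ≤ ‖x‖})
      (fun R => (measurableSet_le measurable_const measurable_norm).nullMeasurableSet)
      (fun R R' hRR' x hx => hRR'.trans hx) ⟨0, measure_ne_top _ _⟩
    rwa [hempty, measure_empty] at this
  obtain ⟨R, hR⟩ := (htail.eventually_lt_const hγ).exists
  refine ⟨R, ?_⟩
  have hlimsup := ProbabilityMeasure.limsup_measure_closed_le_of_tendsto h.tendsto
    (isClosed_le (continuous_const (y := R)) continuous_norm)
  filter_upwards [eventually_lt_of_limsup_lt (hlimsup.trans_lt hR)] with i hi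
  rwa [ProbabilityMeasure.coe_mk, Measure.map_apply_of_aemeasurable (h.forall_aemeasurable i)
    (measurableSet_le measurable_const measurable_norm)] at hi

end ConvergenceInDistribution

section Coupling

variable {κ : Type*} {l : Filter κ} {ι : Type*} [Fintype ι]
  {Ω : Type*} [MeasurableSpace Ω] {μ : Measure Ω} [IsProbabilityMeasure μ]
  {Ω' : Type*} [MeasurableSpace Ω'] {μ' : Measure Ω'} [IsProbabilityMeasure μ']

theorem TendstoInDistribution.tendstoInMeasure_sub_of_le {U V : κ → Ω → ι → ℝ} {Z : Ω' → ι → ℝ}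
    (hU : TendstoInDistribution U l Z (fun _ => μ) μ')
    (hV : TendstoInDistribution V l Z (fun _ => μ) μ') (hle : ∀ i, ∀ᵐ ω ∂μ, V i ω ≤ U i ω) :
    TendstoInMeasure μ (U - V) l 0 := by
  set G := sumArctan ι
  set D : κ → Ω → ℝ := fun i ω => G (U i ω) - G (V i ω)
  have hG_int : ∀ W : κ → Ω → ι → ℝ, (∀ i, AEMeasurable (W i) μ) →
      ∀ i, Integrable (fun ω => G (W i ω)) μ := fun W hW i =>
    (G.integrable (μ.map (W i))).comp_aemeasurable (hW i)
  have hD : TendstoInMeasure μ D l 0 := by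
    refine tendstoInMeasure_zero_of_tendsto_integral_of_nonneg
      (fun i => (hle i).mono fun ω hω => sub_nonneg.2 (sumArctan_mono hω))
      (fun i => (hG_int U hU.forall_aemeasurable i).sub (hG_int V hV.forall_aemeasurable i)) ?_
    simp only [D, integral_sub (hG_int U hU.forall_aemeasurable _)
      (hG_int V hV.forall_aemeasurable _)]
    simpa using (hU.tendsto_integral G).sub (hV.tendsto_integral G)
  rw [tendstoInMeasure_iff_norm] at hD ⊢
  intro ε hε
  refine ENNReal.tendsto_nhds_zero.2 fun γ hγ => ?_
  obtain ⟨R, hR⟩ := hV.exists_eventually_measure_norm_ge_lt (ENNReal.half_pos hγ.ne')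
  obtain ⟨η, hη, hgap⟩ := exists_pos_le_sumArctan_sub (ι := ι) hε R
  filter_upwards [hR, ENNReal.tendsto_nhds_zero.1 (hD η hη) _ (ENNReal.half_pos hγ.ne')]
    with i hRi hDi
  calc μ {ω | ε ≤ ‖(U - V) i ω - (0 : Ω → ι → ℝ) ω‖}
      ≤ μ ({ω | R ≤ ‖V i ω‖} ∪ {ω | η ≤ ‖D i ω - (0 : Ω → ℝ) ω‖}) := by
        refine measure_mono_ae ?_
        filter_upwards [hle i] with ω hω hεω
        simp only [Pi.sub_apply, Pi.zero_apply, sub_zero] at hεω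
        by_cases hVR : ‖V i ω‖ ≤ R
        · right
          simp only [Set.mem_ofPred_eq, Pi.zero_apply, sub_zero, Real.norm_eq_abs]
          exact (hgap _ _ hω hVR hεω).trans (le_abs_self _)
        · exact Or.inl (not_le.1 hVR).le
    _ ≤ γ / 2 + γ / 2 := (measure_union_le _ _).trans (add_le_add hRi.le hDi)
    _ = γ := ENNReal.add_halves γ

end Coupling

end MeasureTheory

theorem stochDom_max_weak_limit_general
    (k : ℕ)
    (μ₁ μ₂ μ₃ : Measure (Fin k → ℝ))
    [IsProbabilityMeasure μ₁] [IsProbabilityMeasure μ₂] [IsProbabilityMeasure μ₃]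
    (Ω : ℕ → Type*) [∀ n, MeasurableSpace (Ω n)]
    (P : ∀ n, Measure (Ω n)) [∀ n, IsProbabilityMeasure (P n)]
    (X X' Y Y' : ∀ n, Ω n → (Fin k → ℝ))
    (hX : ∀ n, Measurable (X n)) (hX' : ∀ n, Measurable (X' n))
    (hY : ∀ n, Measurable (Y n)) (hY' : ∀ n, Measurable (Y' n))
    (hgeX : ∀ n, ∀ᵐ ω ∂(P n), ∀ i, X' n ω i ≤ X n ω i)
    (hgeY : ∀ n, ∀ᵐ ω ∂(P n), ∀ i, Y' n ω i ≤ Y n ω i)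
    (hXconv : ∀ f : BoundedContinuousFunction (Fin k → ℝ) ℝ,
      Tendsto (fun n => ∫ ω, f (X n ω) ∂(P n)) atTop (𝓝 (∫ x, f x ∂μ₁)))
    (hX'conv : ∀ f : BoundedContinuousFunction (Fin k → ℝ) ℝ,
      Tendsto (fun n => ∫ ω, f (X' n ω) ∂(P n)) atTop (𝓝 (∫ x, f x ∂μ₁)))
    (hYconv : ∀ f : BoundedContinuousFunction (Fin k → ℝ) ℝ,
      Tendsto (fun n => ∫ ω, f (Y n ω) ∂(P n)) atTop (𝓝 (∫ x, f x ∂μ₂)))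
    (hY'conv : ∀ f : BoundedContinuousFunction (Fin k → ℝ) ℝ,
      Tendsto (fun n => ∫ ω, f (Y' n ω) ∂(P n)) atTop (𝓝 (∫ x, f x ∂μ₂)))
    (hZ'conv : ∀ f : BoundedContinuousFunction (Fin k → ℝ) ℝ,
      Tendsto (fun n => ∫ ω, f (fun i => max (X' n ω i) (Y' n ω i)) ∂(P n)) atTop
        (𝓝 (∫ x, f x ∂μ₃))) :
    ∀ f : BoundedContinuousFunction (Fin k → ℝ) ℝ,
      Tendsto (fun n => ∫ ω, f (fun i => max (X n ω i) (Y n ω i)) ∂(P n)) atTop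
        (𝓝 (∫ x, f x ∂μ₃)) := by
  -- Convergence in probability needs a common probability space: realise all the random
  -- vectors on the product space `∀ n, Ω n`.
  set Q := Measure.infinitePi P
  let lift : (∀ n, Ω n → (Fin k → ℝ)) → ℕ → (∀ n, Ω n) → Fin k → ℝ := fun U n ω => U n (ω n)
  have hconv {U : ∀ n, Ω n → (Fin k → ℝ)} (hU : ∀ n, Measurable (U n))
      {μ : Measure (Fin k → ℝ)} [IsProbabilityMeasure μ] :
      TendstoInDistribution (lift U) atTop id (fun _ => Q) μ ↔
        ∀ f : (Fin k → ℝ) →ᵇ ℝ, Tendsto (fun n => ∫ ω, f (U n ω) ∂P n) atTop (𝓝 (∫ x, f x ∂μ)) :=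
    (tendstoInDistribution_comp_eval_iff hU).trans
      (tendstoInDistribution_id_iff (fun n => (hU n).aemeasurable) μ)
  have hle {U V : ∀ n, Ω n → (Fin k → ℝ)} (h : ∀ n, ∀ᵐ ω ∂(P n), ∀ i, V n ω i ≤ U n ω i)
      (n : ℕ) : ∀ᵐ ω ∂Q, lift V n ω ≤ lift U n ω :=
    (measurePreserving_eval_infinitePi P n).quasiMeasurePreserving.ae (h n)
  have hmax {U V : ∀ n, Ω n → (Fin k → ℝ)} (hU : ∀ n, Measurable (U n))
      (hV : ∀ n, Measurable (V n)) (n : ℕ) :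
      Measurable fun ω => fun i => max (U n ω i) (V n ω i) := by
    have := hU n; have := hV n; fun_prop
  have hXX' := ((hconv hX).2 hXconv).tendstoInMeasure_sub_of_le ((hconv hX').2 hX'conv)
    (hle hgeX)
  have hYY' := ((hconv hY).2 hYconv).tendstoInMeasure_sub_of_le ((hconv hY').2 hY'conv)
    (hle hgeY)
  have hZZ' : TendstoInMeasure Q
      (fun n ω => lift X n ω ⊔ lift Y n ω - lift X' n ω ⊔ lift Y' n ω) atTop 0 :=
    hXX'.of_norm_le_max hYY' fun n ω => norm_sup_sub_sup_le_max _ _ _ _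
  exact (hconv (hmax hX hY)).1 (tendstoInDistribution_of_tendstoInMeasure_sub _ _
    ((hconv (hmax hX' hY')).2 hZ'conv) hZZ'
    fun n => ((hmax hX hY n).comp (measurable_pi_apply n)).aemeasurable)

/-- **Coupling lemma for coordinate-wise maxima (Lemma 4.2 generalization).**
If `X n ≥ X' n` with both converging weakly to `μ₁`, `Y n ≥ Y' n` with both converging weakly
to `μ₂` (all four on a common probability space for each `n`), and the coordinate-wise maximum
`Z' n = max (X' n, Y' n)` converges weakly to `μ₃`, then so does `Z n = max (X n, Y n)`. -/
theorem stochDom_max_weak_limit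
    (k : ℕ) (hk : 1 ≤ k)
    (μ₁ μ₂ μ₃ : Measure (Fin k → ℝ))
    [IsProbabilityMeasure μ₁] [IsProbabilityMeasure μ₂] [IsProbabilityMeasure μ₃]
    (Ω : ℕ → Type*) [∀ n, MeasurableSpace (Ω n)]
    (P : ∀ n, Measure (Ω n)) [∀ n, IsProbabilityMeasure (P n)]
    (X X' Y Y' : ∀ n, Ω n → (Fin k → ℝ))
    (hX : ∀ n, Measurable (X n)) (hX' : ∀ n, Measurable (X' n))
    (hY : ∀ n, Measurable (Y n)) (hY' : ∀ n, Measurable (Y' n))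
    (hgeX : ∀ n, ∀ᵐ ω ∂(P n), ∀ i, X' n ω i ≤ X n ω i)
    (hgeY : ∀ n, ∀ᵐ ω ∂(P n), ∀ i, Y' n ω i ≤ Y n ω i)
    (hXconv : ∀ f : BoundedContinuousFunction (Fin k → ℝ) ℝ,
      Tendsto (fun n => ∫ ω, f (X n ω) ∂(P n)) atTop (𝓝 (∫ x, f x ∂μ₁)))
    (hX'conv : ∀ f : BoundedContinuousFunction (Fin k → ℝ) ℝ,
      Tendsto (fun n => ∫ ω, f (X' n ω) ∂(P n)) atTop (𝓝 (∫ x, f x ∂μ₁)))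
    (hYconv : ∀ f : BoundedContinuousFunction (Fin k → ℝ) ℝ,
      Tendsto (fun n => ∫ ω, f (Y n ω) ∂(P n)) atTop (𝓝 (∫ x, f x ∂μ₂)))
    (hY'conv : ∀ f : BoundedContinuousFunction (Fin k → ℝ) ℝ,
      Tendsto (fun n => ∫ ω, f (Y' n ω) ∂(P n)) atTop (𝓝 (∫ x, f x ∂μ₂)))
    (hZ'conv : ∀ f : BoundedContinuousFunction (Fin k → ℝ) ℝ,
      Tendsto (fun n => ∫ ω, f (fun i => max (X' n ω i) (Y' n ω i)) ∂(P n)) atTop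
        (𝓝 (∫ x, f x ∂μ₃))) :
    ∀ f : BoundedContinuousFunction (Fin k → ℝ) ℝ,
      Tendsto (fun n => ∫ ω, f (fun i => max (X n ω i) (Y n ω i)) ∂(P n)) atTop
        (𝓝 (∫ x, f x ∂μ₃)) :=
  stochDom_max_weak_limit_general k μ₁ μ₂ μ₃ Ω P X X' Y Y' hX hX' hY hY' hgeX hgeY hXconv hX'conv
    hYconv hY'conv hZ'conv
end

section
/- Let k ≥ 1, let μ₁, μ₂ be Borel probability measures on ℝ^k and let ν be a Borel probability measure on ℝ^{2k}. Let X_n, X̃_n, Y_n, Ỹ_n be ℝ^k-valued random vectors, all four defined on a common probability space for each n, such that X_n ≥ X̃_n, X_n ⇒ μ₁ and X̃_n ⇒ μ₁, and Y_n ≥ Ỹ_n, Y_n ⇒ μ₂ and Ỹ_n ⇒ μ₂. If the ℝ^{2k}-valued random vectors (X̃_n, Ỹ_n) converge weakly in law to ν, then the ℝ^{2k}-valued random vectors (X_n, Y_n) also converge weakly in law to ν. -/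
/-!
Since `X' n ≤ X n` and both converge to the same law, `X n - X' n → 0` in probability. Indeed, for
the bounded monotone function `g x = ∑ i, max (-r) (min r (x i))` we have
`E[g (X n) - g (X' n)] → 0`, and whenever `X' n` lies in the ball of radius `r - η` (which it
does with high probability, uniformly in `n`, by tightness) while some coordinate of `X n - X' n`
is at least `η`, the increment `g (X n) - g (X' n)` is at least `η`; Markov's inequality does the
rest. The same holds for `Y`, so `(X n, Y n) - (X' n, Y' n) → 0` in probability and Slutsky's
lemma transfers the limit `ν` from `(X' n, Y' n)` to `(X n, Y n)`. Slutsky's lemma needs a common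
probability space: realise every variable on `∏ n, Ω n` with the product measure, which changes no
law.
-/

open MeasureTheory Filter Topology
open scoped BoundedContinuousFunction

noncomputable def symmClamp (r : ℝ) : ℝ →ᵇ ℝ :=
  .ofNormedAddCommGroup (fun t ↦ max (-r) (min r t)) (by fun_prop) |r| fun t ↦ by
    rw [Real.norm_eq_abs, abs_le]
    exact ⟨(neg_le_neg (le_abs_self r)).trans (le_max_left _ _),
      max_le (neg_le_abs r) ((min_le_left _ _).trans (le_abs_self r))⟩

lemma symmClamp_apply (r t : ℝ) : symmClamp r t = max (-r) (min r t) := rfl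

lemma symmClamp_mono (r : ℝ) : Monotone (symmClamp r) := fun _ _ h ↦ by
  simp only [symmClamp_apply]
  gcongr

lemma le_symmClamp_sub_symmClamp {r a b η : ℝ} (hη : 0 ≤ η) (ha : |a| + η ≤ r)
    (hab : a + η ≤ b) : η ≤ symmClamp r b - symmClamp r a := by
  obtain ⟨ha₁, ha₂⟩ := abs_le.1 (show |a| ≤ r by linarith)
  have hb : a + η ≤ min r b := le_min (by linarith [le_abs_self a]) hab
  rw [symmClamp_apply, symmClamp_apply, min_eq_right ha₂, max_eq_right ha₁]
  linarith [le_max_right (-r) (min r b)]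

noncomputable def coordClampSum (ι : Type*) [Fintype ι] (r : ℝ) : (ι → ℝ) →ᵇ ℝ :=
  ∑ i, (symmClamp r).compContinuous (ContinuousMap.eval i)

section CoordClampSum

variable {ι : Type*} [Fintype ι]

lemma coordClampSum_apply (r : ℝ) (x : ι → ℝ) :
    coordClampSum ι r x = ∑ i, symmClamp r (x i) := by
  simp [coordClampSum]

lemma coordClampSum_mono (r : ℝ) : Monotone (coordClampSum ι r) := fun x y h ↦ by
  simp only [coordClampSum_apply]
  exact Finset.sum_le_sum fun i _ ↦ symmClamp_mono r (h i)

lemma le_coordClampSum_sub_coordClampSum {r η : ℝ} {x y : ι → ℝ} (hxy : x ≤ y) (hη : 0 < η)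
    (hx : ‖x‖ + η ≤ r) (hd : η ≤ ‖y - x‖) : η ≤ coordClampSum ι r y - coordClampSum ι r x := by
  obtain ⟨i, hi⟩ : ∃ i, x i + η ≤ y i := by
    by_contra! h
    refine hd.not_gt ((pi_norm_lt_iff hη).2 fun i ↦ ?_)
    rw [Pi.sub_apply, Real.norm_eq_abs, abs_of_nonneg (sub_nonneg.2 (hxy i))]
    linarith [h i]
  have hxi : |x i| + η ≤ r := by linarith [norm_le_pi_norm x i, Real.norm_eq_abs (x i)]
  rw [coordClampSum_apply, coordClampSum_apply, ← Finset.sum_sub_distrib]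
  exact (le_symmClamp_sub_symmClamp hη.le hxi hi).trans <| Finset.single_le_sum
    (f := fun j ↦ symmClamp r (y j) - symmClamp r (x j))
    (fun j _ ↦ sub_nonneg.2 (symmClamp_mono r (hxy j))) (Finset.mem_univ i)

end CoordClampSum

namespace MeasureTheory

section VaryingSpaces

variable {ι E Ω' : Type*} {Ω : ι → Type*} {m : ∀ i, MeasurableSpace (Ω i)}
  {μ : (i : ι) → Measure (Ω i)} [∀ i, IsProbabilityMeasure (μ i)]
  {m' : MeasurableSpace Ω'} {μ' : Measure Ω'} [IsProbabilityMeasure μ']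
  {mE : MeasurableSpace E} [TopologicalSpace E] [OpensMeasurableSpace E]
  {X : (i : ι) → Ω i → E} {Z : Ω' → E} {l : Filter ι}

lemma tendstoInDistribution_iff_forall_integral_tendsto (hX : ∀ i, AEMeasurable (X i) (μ i))
    (hZ : AEMeasurable Z μ') :
    TendstoInDistribution X l Z μ μ' ↔ ∀ f : E →ᵇ ℝ,
      Tendsto (fun i ↦ ∫ ω, f (X i ω) ∂(μ i)) l (𝓝 (∫ ω, f (Z ω) ∂μ')) := by
  have hmap (f : E →ᵇ ℝ) :
      (∀ i, ∫ x, f x ∂((μ i).map (X i)) = ∫ ω, f (X i ω) ∂(μ i)) ∧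
        ∫ x, f x ∂(μ'.map Z) = ∫ ω, f (Z ω) ∂μ' :=
    ⟨fun i ↦ integral_map (hX i) f.continuous.aestronglyMeasurable,
      integral_map hZ f.continuous.aestronglyMeasurable⟩
  refine ⟨fun h f ↦ ?_, fun h ↦ ⟨hX, hZ, ?_⟩⟩
  · have := ProbabilityMeasure.tendsto_iff_forall_integral_tendsto.1 h.tendsto f
    simpa only [ProbabilityMeasure.coe_mk, (hmap f).1, (hmap f).2] using this
  · refine ProbabilityMeasure.tendsto_iff_forall_integral_tendsto.2 fun f ↦ ?_
    simpa only [ProbabilityMeasure.coe_mk, (hmap f).1, (hmap f).2] using h f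

lemma tendstoInDistribution_comp_measurePreserving_iff {Ω₀ : Type*} {m₀ : MeasurableSpace Ω₀}
    {P : Measure Ω₀} [IsProbabilityMeasure P] {φ : ∀ i, Ω₀ → Ω i}
    (hφ : ∀ i, MeasurePreserving (φ i) P (μ i)) (hX : ∀ i, AEMeasurable (X i) (μ i)) :
    TendstoInDistribution (fun i ↦ X i ∘ φ i) l Z (fun _ ↦ P) μ' ↔
      TendstoInDistribution X l Z μ μ' := by
  have hXφ : ∀ i, AEMeasurable (X i ∘ φ i) P := fun i ↦
    ((hφ i).map_eq ▸ hX i).comp_aemeasurable (hφ i).measurable.aemeasurable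
  have hmap : ∀ i, P.map (X i ∘ φ i) = (μ i).map (X i) := fun i ↦ by
    rw [← (hφ i).map_eq, AEMeasurable.map_map_of_aemeasurable ((hφ i).map_eq ▸ hX i)
      (hφ i).measurable.aemeasurable]
  refine ⟨fun h ↦ ⟨hX, h.aemeasurable_limit, ?_⟩, fun h ↦ ⟨hXφ, h.aemeasurable_limit, ?_⟩⟩
  · simpa only [hmap] using h.tendsto
  · simpa only [hmap] using h.tendsto

lemma tendstoInDistribution_comp_eval_infinitePi_iff {Ω : ι → Type*}
    {m : ∀ i, MeasurableSpace (Ω i)} {P : (i : ι) → Measure (Ω i)} [∀ i, IsProbabilityMeasure (P i)]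
    {ρ : Measure E} [IsProbabilityMeasure ρ] {X : (i : ι) → Ω i → E}
    (hX : ∀ i, AEMeasurable (X i) (P i)) :
    TendstoInDistribution (fun i ω ↦ X i (ω i)) l id (fun _ ↦ Measure.infinitePi P) ρ ↔
      ∀ f : E →ᵇ ℝ, Tendsto (fun i ↦ ∫ ω, f (X i ω) ∂(P i)) l (𝓝 (∫ x, f x ∂ρ)) :=
  (tendstoInDistribution_comp_measurePreserving_iff (measurePreserving_eval_infinitePi P) hX).trans
    (tendstoInDistribution_iff_forall_integral_tendsto hX aemeasurable_id)

end VaryingSpaces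

section Tightness

variable {Ω' : Type*} {Ω : ℕ → Type*} {m : ∀ n, MeasurableSpace (Ω n)}
  {μ : (n : ℕ) → Measure (Ω n)} [∀ n, IsProbabilityMeasure (μ n)]
  {m' : MeasurableSpace Ω'} {μ' : Measure Ω'} [IsProbabilityMeasure μ']

lemma TendstoInDistribution.isTightMeasureSet_range_map {E : Type*} {mE : MeasurableSpace E}
    [PseudoMetricSpace E] [CompleteSpace E] [SecondCountableTopology E] [OpensMeasurableSpace E]
    {X : (n : ℕ) → Ω n → E} {Z : Ω' → E} (h : TendstoInDistribution X atTop Z μ μ') :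
    IsTightMeasureSet (Set.range fun n ↦ (μ n).map (X n)) := by
  have hS := h.tendsto.isCompact_insert_range.closure_of_subset (Set.subset_insert _ _)
  refine (isTightMeasureSet_of_isCompact_closure hS).subset ?_
  rintro _ ⟨n, rfl⟩
  exact ⟨_, ⟨n, rfl⟩, rfl⟩

lemma TendstoInDistribution.exists_measureReal_norm_gt_le {E : Type*} {mE : MeasurableSpace E}
    [NormedAddCommGroup E] [CompleteSpace E] [SecondCountableTopology E] [BorelSpace E]
    {X : (n : ℕ) → Ω n → E} {Z : Ω' → E} (h : TendstoInDistribution X atTop Z μ μ') {δ : ℝ}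
    (hδ : 0 < δ) : ∃ R, ∀ n, (μ n).real {ω | R < ‖X n ω‖} ≤ δ := by
  have htail := tendsto_measure_norm_gt_of_isTightMeasureSet h.isTightMeasureSet_range_map
  obtain ⟨R, hR⟩ := (htail.eventually (ge_mem_nhds (ENNReal.ofReal_pos.2 hδ))).exists
  refine ⟨R, fun n ↦ ENNReal.toReal_le_of_le_ofReal hδ.le (le_trans ?_ hR)⟩
  refine (Measure.map_apply_of_aemeasurable (h.forall_aemeasurable n)
    (measurableSet_lt measurable_const measurable_norm)).symm.le.trans ?_
  exact le_iSup₂ (f := fun (ν : Measure E) (_ : ν ∈ Set.range _) ↦ ν {x | R < ‖x‖}) _ ⟨n, rfl⟩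

end Tightness

theorem TendstoInMeasure.prodMk {ι α E F : Type*} {l : Filter ι} {mα : MeasurableSpace α}
    {ν : Measure α} [PseudoEMetricSpace E] [PseudoEMetricSpace F] {f : ι → α → E} {g : α → E}
    {f' : ι → α → F} {g' : α → F} (hf : TendstoInMeasure ν f l g)
    (hf' : TendstoInMeasure ν f' l g') :
    TendstoInMeasure ν (fun i x ↦ (f i x, f' i x)) l (fun x ↦ (g x, g' x)) := by
  intro ε hε
  have hsum := (hf ε hε).add (hf' ε hε)
  rw [add_zero] at hsum
  refine tendsto_of_tendsto_of_tendsto_of_le_of_le tendsto_const_nhds hsum (fun _ ↦ zero_le)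
    fun i ↦ (measure_mono fun x hx ↦ ?_).trans (measure_union_le _ _)
  simpa only [Set.mem_ofPred_eq, Prod.edist_eq, le_max_iff, Set.mem_union] using hx

section Coupling

variable {ι Ω : Type*} [Fintype ι] {mΩ : MeasurableSpace Ω} {P : Measure Ω}

theorem measureReal_norm_sub_ge_le_of_ae_le [IsFiniteMeasure P] {X Y : Ω → ι → ℝ}
    (hX : AEMeasurable X P) (hY : AEMeasurable Y P) (hle : X ≤ᵐ[P] Y) {R η : ℝ} (hη : 0 < η) :
    P.real {ω | η ≤ ‖Y ω - X ω‖} ≤ P.real {ω | R < ‖X ω‖} +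
      (∫ ω, coordClampSum ι (R + η) (Y ω) ∂P - ∫ ω, coordClampSum ι (R + η) (X ω) ∂P) / η := by
  set g := coordClampSum ι (R + η)
  have hgX : Integrable (fun ω ↦ g (X ω)) P := (g.integrable _).comp_aemeasurable hX
  have hgY : Integrable (fun ω ↦ g (Y ω)) P := (g.integrable _).comp_aemeasurable hY
  have hmarkov : η * P.real {ω | η ≤ g (Y ω) - g (X ω)} ≤ ∫ ω, g (Y ω) ∂P - ∫ ω, g (X ω) ∂P := by
    rw [← integral_sub hgY hgX]
    refine mul_meas_ge_le_integral_of_nonneg ?_ (hgY.sub hgX) η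
    filter_upwards [hle] with ω hω
    exact sub_nonneg.2 (coordClampSum_mono _ hω)
  have hcover : {ω | η ≤ ‖Y ω - X ω‖} ≤ᵐ[P]
      ({ω | R < ‖X ω‖} ∪ {ω | η ≤ g (Y ω) - g (X ω)} : Set Ω) := by
    filter_upwards [hle] with ω hω hd
    by_cases hR : R < ‖X ω‖
    · exact Or.inl hR
    · exact Or.inr (le_coordClampSum_sub_coordClampSum hω hη (by linarith [not_lt.1 hR]) hd)
  calc P.real {ω | η ≤ ‖Y ω - X ω‖}
      ≤ P.real ({ω | R < ‖X ω‖} ∪ {ω | η ≤ g (Y ω) - g (X ω)}) :=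
        ENNReal.toReal_mono (measure_ne_top _ _) (measure_mono_ae hcover)
    _ ≤ _ := (measureReal_union_le _ _).trans <| add_le_add_right ((le_div_iff₀' hη).2 hmarkov) _

theorem tendstoInMeasure_sub_of_ae_le [IsProbabilityMeasure P] {Ω' : Type*}
    {m' : MeasurableSpace Ω'} {μ' : Measure Ω'} [IsProbabilityMeasure μ'] {X Y : ℕ → Ω → ι → ℝ}
    {Z : Ω' → ι → ℝ} (hle : ∀ n, X n ≤ᵐ[P] Y n)
    (hX : TendstoInDistribution X atTop Z (fun _ ↦ P) μ')
    (hY : TendstoInDistribution Y atTop Z (fun _ ↦ P) μ') :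
    TendstoInMeasure P (Y - X) atTop 0 := by
  rw [tendstoInMeasure_iff_measureReal_norm]
  intro η hη
  simp only [Pi.sub_apply, Pi.zero_apply, sub_zero]
  suffices ∀ δ > 0, ∀ᶠ n in atTop, P.real {ω | η ≤ ‖Y n ω - X n ω‖} ≤ 2 * δ by
    refine tendsto_order.2 ⟨fun a ha ↦ .of_forall fun n ↦ ha.trans_le measureReal_nonneg,
      fun a ha ↦ ?_⟩
    filter_upwards [this (a / 4) (by positivity)] with n hn
    linarith
  intro δ hδ
  obtain ⟨R, hR⟩ := hX.exists_measureReal_norm_gt_le hδ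
  have hlim (V : ℕ → Ω → ι → ℝ) (hV : TendstoInDistribution V atTop Z (fun _ ↦ P) μ') :=
    (tendstoInDistribution_iff_forall_integral_tendsto hV.forall_aemeasurable
      hV.aemeasurable_limit).1 hV (coordClampSum ι (R + η))
  have hgap := ((hlim Y hY).sub (hlim X hX)).div_const η
  rw [sub_self, zero_div] at hgap
  filter_upwards [hgap.eventually (gt_mem_nhds hδ)] with n hn
  calc P.real {ω | η ≤ ‖Y n ω - X n ω‖}
      ≤ P.real {ω | R < ‖X n ω‖} + _ := measureReal_norm_sub_ge_le_of_ae_le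
        (hX.forall_aemeasurable n) (hY.forall_aemeasurable n) (hle n) hη
    _ ≤ 2 * δ := by linarith [hR n]

end Coupling

end MeasureTheory

theorem stochDom_joint_weak_limit_general
    (k : ℕ)
    (μ₁ μ₂ : Measure (Fin k → ℝ)) [IsProbabilityMeasure μ₁] [IsProbabilityMeasure μ₂]
    (ν : Measure ((Fin k → ℝ) × (Fin k → ℝ))) [IsProbabilityMeasure ν]
    (Ω : ℕ → Type*) [∀ n, MeasurableSpace (Ω n)]
    (P : ∀ n, Measure (Ω n)) [∀ n, IsProbabilityMeasure (P n)]
    (X X' Y Y' : ∀ n, Ω n → (Fin k → ℝ))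
    (hX : ∀ n, Measurable (X n)) (hX' : ∀ n, Measurable (X' n))
    (hY : ∀ n, Measurable (Y n)) (hY' : ∀ n, Measurable (Y' n))
    (hgeX : ∀ n, ∀ᵐ ω ∂(P n), ∀ i, X' n ω i ≤ X n ω i)
    (hgeY : ∀ n, ∀ᵐ ω ∂(P n), ∀ i, Y' n ω i ≤ Y n ω i)
    (hXconv : ∀ f : BoundedContinuousFunction (Fin k → ℝ) ℝ,
      Tendsto (fun n => ∫ ω, f (X n ω) ∂(P n)) atTop (𝓝 (∫ x, f x ∂μ₁)))
    (hX'conv : ∀ f : BoundedContinuousFunction (Fin k → ℝ) ℝ,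
      Tendsto (fun n => ∫ ω, f (X' n ω) ∂(P n)) atTop (𝓝 (∫ x, f x ∂μ₁)))
    (hYconv : ∀ f : BoundedContinuousFunction (Fin k → ℝ) ℝ,
      Tendsto (fun n => ∫ ω, f (Y n ω) ∂(P n)) atTop (𝓝 (∫ x, f x ∂μ₂)))
    (hY'conv : ∀ f : BoundedContinuousFunction (Fin k → ℝ) ℝ,
      Tendsto (fun n => ∫ ω, f (Y' n ω) ∂(P n)) atTop (𝓝 (∫ x, f x ∂μ₂)))
    (hpair'conv : ∀ f : BoundedContinuousFunction ((Fin k → ℝ) × (Fin k → ℝ)) ℝ,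
      Tendsto (fun n => ∫ ω, f (X' n ω, Y' n ω) ∂(P n)) atTop (𝓝 (∫ x, f x ∂ν))) :
    ∀ f : BoundedContinuousFunction ((Fin k → ℝ) × (Fin k → ℝ)) ℝ,
      Tendsto (fun n => ∫ ω, f (X n ω, Y n ω) ∂(P n)) atTop (𝓝 (∫ x, f x ∂ν)) := by
  have hπ n := (measurePreserving_eval_infinitePi P n).quasiMeasurePreserving
  have hlaw {E : Type} [MeasurableSpace E] [TopologicalSpace E] [OpensMeasurableSpace E]
      {ρ : Measure E} [IsProbabilityMeasure ρ] {V : ∀ n, Ω n → E} (hV : ∀ n, Measurable (V n)) :=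
    tendstoInDistribution_comp_eval_infinitePi_iff (l := atTop) (P := P) (ρ := ρ)
      fun n ↦ (hV n).aemeasurable
  have hdX := tendstoInMeasure_sub_of_ae_le (fun n ↦ (hπ n).ae (hgeX n))
    ((hlaw hX').2 hX'conv) ((hlaw hX).2 hXconv)
  have hdY := tendstoInMeasure_sub_of_ae_le (fun n ↦ (hπ n).ae (hgeY n))
    ((hlaw hY').2 hY'conv) ((hlaw hY).2 hYconv)
  refine (hlaw fun n ↦ (hX n).prodMk (hY n)).1 ?_
  refine tendstoInDistribution_of_tendstoInMeasure_sub _ _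
    ((hlaw fun n ↦ (hX' n).prodMk (hY' n)).2 hpair'conv) ?_ fun n ↦ by fun_prop
  exact hdX.prodMk hdY

/-- **Coupling lemma for joint distributions (Lemma 4.3 generalization).**
If `X n ≥ X' n` with both converging weakly to `μ₁`, `Y n ≥ Y' n` with both converging weakly
to `μ₂` (all four on a common probability space for each `n`), and the pairs `(X' n, Y' n)`
converge weakly in law to the Borel probability measure `ν` on `ℝ^k × ℝ^k ≅ ℝ^{2k}`,
then the pairs `(X n, Y n)` also converge weakly in law to `ν`. -/
theorem stochDom_joint_weak_limit
    (k : ℕ) (hk : 1 ≤ k)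
    (μ₁ μ₂ : Measure (Fin k → ℝ)) [IsProbabilityMeasure μ₁] [IsProbabilityMeasure μ₂]
    (ν : Measure ((Fin k → ℝ) × (Fin k → ℝ))) [IsProbabilityMeasure ν]
    (Ω : ℕ → Type*) [∀ n, MeasurableSpace (Ω n)]
    (P : ∀ n, Measure (Ω n)) [∀ n, IsProbabilityMeasure (P n)]
    (X X' Y Y' : ∀ n, Ω n → (Fin k → ℝ))
    (hX : ∀ n, Measurable (X n)) (hX' : ∀ n, Measurable (X' n))
    (hY : ∀ n, Measurable (Y n)) (hY' : ∀ n, Measurable (Y' n))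
    (hgeX : ∀ n, ∀ᵐ ω ∂(P n), ∀ i, X' n ω i ≤ X n ω i)
    (hgeY : ∀ n, ∀ᵐ ω ∂(P n), ∀ i, Y' n ω i ≤ Y n ω i)
    (hXconv : ∀ f : BoundedContinuousFunction (Fin k → ℝ) ℝ,
      Tendsto (fun n => ∫ ω, f (X n ω) ∂(P n)) atTop (𝓝 (∫ x, f x ∂μ₁)))
    (hX'conv : ∀ f : BoundedContinuousFunction (Fin k → ℝ) ℝ,
      Tendsto (fun n => ∫ ω, f (X' n ω) ∂(P n)) atTop (𝓝 (∫ x, f x ∂μ₁)))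
    (hYconv : ∀ f : BoundedContinuousFunction (Fin k → ℝ) ℝ,
      Tendsto (fun n => ∫ ω, f (Y n ω) ∂(P n)) atTop (𝓝 (∫ x, f x ∂μ₂)))
    (hY'conv : ∀ f : BoundedContinuousFunction (Fin k → ℝ) ℝ,
      Tendsto (fun n => ∫ ω, f (Y' n ω) ∂(P n)) atTop (𝓝 (∫ x, f x ∂μ₂)))
    (hpair'conv : ∀ f : BoundedContinuousFunction ((Fin k → ℝ) × (Fin k → ℝ)) ℝ,
      Tendsto (fun n => ∫ ω, f (X' n ω, Y' n ω) ∂(P n)) atTop (𝓝 (∫ x, f x ∂ν))) :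
    ∀ f : BoundedContinuousFunction ((Fin k → ℝ) × (Fin k → ℝ)) ℝ,
      Tendsto (fun n => ∫ ω, f (X n ω, Y n ω) ∂(P n)) atTop (𝓝 (∫ x, f x ∂ν)) :=
  stochDom_joint_weak_limit_general k μ₁ μ₂ ν Ω P X X' Y Y' hX hX' hY hY' hgeX hgeY hXconv hX'conv
    hYconv hY'conv hpair'conv
end

section
/- Fix η ∈ (0,1) and γ > 0 with η < γ/(1+γ). Set w⁻ = (η² − γ²(1−η)²)/(γ²(1−η) + η) and define g : (η−1, η) → ℝ by g(w) = (γ²/η + 1/(1−η))·w + γ²·log(η−w) − log(w+1−η). Then: (i) η−1 < w⁻ < 0; (ii) g'(0) = 0 and g'(w⁻) = 0, i.e., 0 and w⁻ are exactly the critical points computed in the saddle point analysis; (iii) g''(0) = 1/(1−η)² − γ²/η² < 0; and (iv) g(w⁻) < g(0). -/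
/-!
On `(η - 1, η)` the derivative of the phase function factors as
`g'(w) = w (N - D w) / (η (1 - η) (η - w) (w + 1 - η))` with `N = η² - γ²(1 - η)²` and
`D = γ²(1 - η) + η`, so its zeros are `0` and `w⁻ = N / D`. The regime condition
`η < γ / (1 + γ)` says `η < γ (1 - η)`, i.e. `N < 0 < D`, which puts `w⁻` in `(η - 1, 0)`.
On `(w⁻, 0)` both factors `w` and `N - D w` are negative, so `g` increases strictly from `w⁻`
to `0`.
-/

open Real Set

namespace LastPassage

variable (η γ : ℝ)

noncomputable def phase (w : ℝ) : ℝ :=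
  (γ ^ 2 / η + 1 / (1 - η)) * w + γ ^ 2 * Real.log (η - w) - Real.log (w + 1 - η)

noncomputable def phaseDeriv (w : ℝ) : ℝ :=
  γ ^ 2 / η + 1 / (1 - η) - γ ^ 2 / (η - w) - 1 / (w + 1 - η)

noncomputable def criticalPoint : ℝ :=
  (η ^ 2 - γ ^ 2 * (1 - η) ^ 2) / (γ ^ 2 * (1 - η) + η)

variable {η γ}

theorem hasDerivAt_phase {w : ℝ} (h₁ : η - w ≠ 0) (h₂ : w + 1 - η ≠ 0) :
    HasDerivAt (phase η γ) (phaseDeriv η γ w) w := by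
  have hlog₁ := ((hasDerivAt_id' w).const_sub η).log h₁
  have hlog₂ := (((hasDerivAt_id' w).add_const 1).sub_const η).log h₂
  refine ((((hasDerivAt_id' w).const_mul (γ ^ 2 / η + 1 / (1 - η))).add
    (hlog₁.const_mul (γ ^ 2))).sub hlog₂).congr_deriv ?_
  rw [phaseDeriv]
  ring

theorem hasDerivAt_phaseDeriv {w : ℝ} (h₁ : η - w ≠ 0) (h₂ : w + 1 - η ≠ 0) :
    HasDerivAt (phaseDeriv η γ) (1 / (w + 1 - η) ^ 2 - γ ^ 2 / (η - w) ^ 2) w := by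
  have hdiv₁ := (hasDerivAt_const w (γ ^ 2)).fun_div ((hasDerivAt_id' w).const_sub η) h₁
  have hdiv₂ := (hasDerivAt_const w (1 : ℝ)).fun_div
    (((hasDerivAt_id' w).add_const 1).sub_const η) h₂
  refine (((hasDerivAt_const w (γ ^ 2 / η + 1 / (1 - η))).sub hdiv₁).sub hdiv₂).congr_deriv ?_
  ring

theorem phaseDeriv_eq {w : ℝ} (hη₀ : η ≠ 0) (hη₁ : 1 - η ≠ 0) (h₁ : η - w ≠ 0)
    (h₂ : w + 1 - η ≠ 0) :
    phaseDeriv η γ w = w * ((η ^ 2 - γ ^ 2 * (1 - η) ^ 2) - (γ ^ 2 * (1 - η) + η) * w)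
      / (η * (1 - η) * (η - w) * (w + 1 - η)) := by
  rw [phaseDeriv]
  field_simp
  ring

theorem deriv_phase_eventuallyEq {w : ℝ} (h₁ : η - w ≠ 0) (h₂ : w + 1 - η ≠ 0) :
    deriv (phase η γ) =ᶠ[nhds w] phaseDeriv η γ := by
  filter_upwards [(continuousAt_const.sub continuousAt_id).eventually_ne h₁,
    ((continuousAt_id.add continuousAt_const).sub continuousAt_const).eventually_ne h₂]
    with x hx₁ hx₂ using (hasDerivAt_phase hx₁ hx₂).deriv

theorem deriv_deriv_phase {w : ℝ} (h₁ : η - w ≠ 0) (h₂ : w + 1 - η ≠ 0) :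
    deriv (deriv (phase η γ)) w = 1 / (w + 1 - η) ^ 2 - γ ^ 2 / (η - w) ^ 2 := by
  rw [(deriv_phase_eventuallyEq h₁ h₂).deriv_eq, (hasDerivAt_phaseDeriv h₁ h₂).deriv]

theorem phaseDeriv_eq_zero_iff {w : ℝ} (hη₀ : η ≠ 0) (hη₁ : 1 - η ≠ 0) (h₁ : η - w ≠ 0)
    (h₂ : w + 1 - η ≠ 0) (hD : γ ^ 2 * (1 - η) + η ≠ 0) :
    phaseDeriv η γ w = 0 ↔ w = 0 ∨ w = criticalPoint η γ := by
  have hden : η * (1 - η) * (η - w) * (w + 1 - η) ≠ 0 := by positivity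
  rw [phaseDeriv_eq hη₀ hη₁ h₁ h₂, div_eq_zero_iff, or_iff_left hden, mul_eq_zero, sub_eq_zero,
    criticalPoint, eq_div_iff hD, mul_comm w, eq_comm (b := _ * _)]

theorem phaseDeriv_pos {w : ℝ} (hη : η ∈ Ioo 0 1) (hD : 0 < γ ^ 2 * (1 - η) + η)
    (hw₁ : η - 1 < w) (hw₀ : w < 0) (hcw : criticalPoint η γ < w) :
    0 < phaseDeriv η γ w := by
  obtain ⟨hη₀, hη₁⟩ := hη
  rw [criticalPoint, div_lt_iff₀ hD] at hcw
  rw [phaseDeriv_eq (by linarith) (by linarith) (by linarith) (by linarith)]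
  apply div_pos
  · exact mul_pos_of_neg_of_neg hw₀ (by linarith)
  · apply_rules [mul_pos] <;> linarith

theorem phase_strictMonoOn (hη : η ∈ Ioo 0 1) (hD : 0 < γ ^ 2 * (1 - η) + η)
    (hc : η - 1 < criticalPoint η γ) :
    StrictMonoOn (phase η γ) (Icc (criticalPoint η γ) 0) := by
  have hsub : Icc (criticalPoint η γ) 0 ⊆ Ioo (η - 1) η := Icc_subset_Ioo hc hη.1
  have hderiv {w} (hw : w ∈ Ioo (η - 1) η) : HasDerivAt (phase η γ) (phaseDeriv η γ w) w :=
    hasDerivAt_phase (by linarith [hw.2]) (by linarith [hw.1])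
  apply strictMonoOn_of_deriv_pos (convex_Icc _ _)
  · exact fun w hw => (hderiv (hsub hw)).continuousAt.continuousWithinAt
  · intro w hw
    rw [interior_Icc] at hw
    rw [(hderiv (hsub (Ioo_subset_Icc_self hw))).deriv]
    exact phaseDeriv_pos hη hD (hc.trans hw.1) hw.2 hw.1

theorem lt_mul_one_sub_of_lt_div_one_add (hγ : 0 < γ) (hc : η < γ / (1 + γ)) :
    η < γ * (1 - η) := by
  rw [lt_div_iff₀ (by linarith)] at hc
  linarith

theorem sq_lt_sq_mul_one_sub_sq (hη : 0 < η) (h : η < γ * (1 - η)) :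
    η ^ 2 < γ ^ 2 * (1 - η) ^ 2 := by
  rw [← mul_pow]
  exact pow_lt_pow_left₀ h hη.le two_ne_zero

theorem criticalPoint_mem_Ioo (hη : 0 < η) (hN : η ^ 2 < γ ^ 2 * (1 - η) ^ 2)
    (hD : 0 < γ ^ 2 * (1 - η) + η) :
    criticalPoint η γ ∈ Ioo (η - 1) 0 := by
  rw [criticalPoint]
  constructor
  · rw [lt_div_iff₀ hD]
    linarith
  · exact div_neg_of_neg_of_pos (by linarith) hD

end LastPassage

open LastPassage

/-- **Critical points of the phase function in the boundary-dominated regime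
(proof of Proposition `Prop: gauss`).** For `η ∈ (0,1)`, `γ > 0` with `η < γ/(1+γ)`, set
`w⁻ = (η² − γ²(1−η)²)/(γ²(1−η) + η)` and
`g(w) = (γ²/η + 1/(1−η))w + γ²·log(η−w) − log(w+1−η)` on `(η−1, η)`. Then:
(i) `η−1 < w⁻ < 0`; (ii) `0` and `w⁻` are exactly the critical points of `g` in `(η−1, η)`;
(iii) `g''(0) = 1/(1−η)² − γ²/η² < 0`; and (iv) `g(w⁻) < g(0)`. -/
theorem phase_function_critical_points_gaussian_regime
    (η γ : ℝ) (hη : η ∈ Ioo (0 : ℝ) 1) (hγ : 0 < γ) (hc : η < γ / (1 + γ))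
    (wm : ℝ) (hwm : wm = (η ^ 2 - γ ^ 2 * (1 - η) ^ 2) / (γ ^ 2 * (1 - η) + η))
    (g : ℝ → ℝ)
    (hg : ∀ w, g w = (γ ^ 2 / η + 1 / (1 - η)) * w
      + γ ^ 2 * Real.log (η - w) - Real.log (w + 1 - η)) :
    (η - 1 < wm ∧ wm < 0) ∧
    (deriv g 0 = 0 ∧ deriv g wm = 0 ∧
      ∀ w ∈ Ioo (η - 1) η, deriv g w = 0 → w = 0 ∨ w = wm) ∧
    (deriv (deriv g) 0 = 1 / (1 - η) ^ 2 - γ ^ 2 / η ^ 2 ∧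
      deriv (deriv g) 0 < 0) ∧
    g wm < g 0 := by
  obtain ⟨hη₀, hη₁⟩ := hη
  obtain rfl : g = phase η γ := funext hg
  obtain rfl : wm = criticalPoint η γ := hwm
  have hN := sq_lt_sq_mul_one_sub_sq hη₀ (lt_mul_one_sub_of_lt_div_one_add hγ hc)
  have hD : 0 < γ ^ 2 * (1 - η) + η := by
    have : 0 < 1 - η := by linarith
    positivity
  obtain ⟨hwm₁, hwm₀⟩ := criticalPoint_mem_Ioo hη₀ hN hD
  have hcrit {w} (hw : w ∈ Ioo (η - 1) η) :
      deriv (phase η γ) w = 0 ↔ w = 0 ∨ w = criticalPoint η γ := by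
    have h₁ : η - w ≠ 0 := by linarith [hw.2]
    have h₂ : w + 1 - η ≠ 0 := by linarith [hw.1]
    rw [(hasDerivAt_phase h₁ h₂).deriv,
      phaseDeriv_eq_zero_iff (by linarith) (by linarith) h₁ h₂ hD.ne']
  have h₀ : (0 : ℝ) ∈ Ioo (η - 1) η := ⟨by linarith, hη₀⟩
  have hg'' : deriv (deriv (phase η γ)) 0 = 1 / (1 - η) ^ 2 - γ ^ 2 / η ^ 2 := by
    simpa only [zero_add, sub_zero] using
      deriv_deriv_phase (γ := γ) (w := 0) (by linarith) (by linarith)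
  refine ⟨⟨hwm₁, hwm₀⟩, ⟨(hcrit h₀).2 (.inl rfl), (hcrit ⟨hwm₁, by linarith⟩).2 (.inr rfl),
    fun w hw => (hcrit hw).1⟩, ⟨hg'', ?_⟩, ?_⟩
  · rw [hg'', sub_neg, div_lt_div_iff₀ (by positivity) (by positivity)]
    linarith
  · exact phase_strictMonoOn ⟨hη₀, hη₁⟩ hD hwm₁ (left_mem_Icc.2 hwm₀.le)
      (right_mem_Icc.2 hwm₀.le) hwm₀
end
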